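/- arXiv:2110.03521 — 4 statements merged into one kernel-verified Lean document; each statement's English description precedes it below -/
import Mathlib

section
/- Let d ≥ 1 be an integer, ξ = (ξ₁,…,ξ₆) ∈ ℝ⁶, s ∈ ℝ, Λ ∈ ℝ. Define ξ′ = (ξ₁−ξ₆, ξ₁−ξ₅, ξ₁−ξ₄, ξ₁−ξ₃, ξ₁−ξ₂, 0) and s′ = ξ₁ − s − d, and let J be the d×d exchange matrix with J_{jk} = 1 if j+k = d+1 and 0 otherwise. Then X(d, ξ′, s′, Λ) = −J·X(d, ξ, s, Λ)·J and Y(d, ξ′, s′, Λ) = J·Y(d, ξ, s, Λ)·J. -/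
noncomputable section

open Finset Matrix

/-- `E_k(j) = Σ_{i=1}^{6} (ξᵢ − j − s + 1/2)^k`. -/
def Efun (ξ : Fin 6 → ℝ) (s j : ℝ) (k : ℕ) : ℝ := ∑ i, (ξ i - j - s + 1/2) ^ k

/-- `λ₊ = Λ/2 + (ξ₁+⋯+ξ₆)/6`. -/
def lamP (ξ : Fin 6 → ℝ) (Λ : ℝ) : ℝ := Λ / 2 + (∑ i, ξ i) / 6

/-- `λ₋ = −Λ/2 + (ξ₁+⋯+ξ₆)/6`. -/
def lamM (ξ : Fin 6 → ℝ) (Λ : ℝ) : ℝ := -Λ / 2 + (∑ i, ξ i) / 6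

/-- Superdiagonal entry `X_{j,j+1} = (j+s−ξ₁)(j+s−ξ₂)(j+s−ξ₃)`. -/
def Xup (ξ : Fin 6 → ℝ) (s j : ℝ) : ℝ := (j + s - ξ 0) * (j + s - ξ 1) * (j + s - ξ 2)

/-- Subdiagonal entry `X_{j+1,j} = (j+s−ξ₄)(j+s−ξ₅)(j+s−ξ₆)`. -/
def Xlow (ξ : Fin 6 → ℝ) (s j : ℝ) : ℝ := (j + s - ξ 3) * (j + s - ξ 4) * (j + s - ξ 5)

/-- Diagonal entry of `X`. -/
def Xdiag (ξ : Fin 6 → ℝ) (s Λ j : ℝ) : ℝ :=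
  -(1 / 108) * ((7 / 2) * (Efun ξ s j 1) ^ 3 - 18 * (Efun ξ s j 1) * (Efun ξ s j 2)
      + 18 * (Efun ξ s j 3))
    - (1 / 24) * (Efun ξ s j 1) * (Λ ^ 2 + 2)

/-- Diagonal entry of `Y`. -/
def Ydiag (ξ : Fin 6 → ℝ) (s Λ j : ℝ) : ℝ :=
  (1 / 288) * ((5 / 2) * (Efun ξ s j 1) ^ 4 + 32 * (Efun ξ s j 1) * (Efun ξ s j 3)
    + 6 * ((Efun ξ s j 2) ^ 2 - 3 * (Efun ξ s j 1) ^ 2 * (Efun ξ s j 2) - 4 * (Efun ξ s j 4))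
    + 6 * (Efun ξ s j 2) * (Λ ^ 2 + 2) - 3 * (Efun ξ s j 1) ^ 2 * (Λ ^ 2 - 2)
    - (3 / 2) * Λ ^ 4 + 6 * Λ ^ 2 - 36)

/-- The `d×d` tridiagonal matrix `X(d,ξ,s,Λ)` (rows/columns indexed `0,…,d−1`,
corresponding to the 1-based indices `1,…,d`). -/
def Xmat (d : ℕ) (ξ : Fin 6 → ℝ) (s Λ : ℝ) : Matrix (Fin d) (Fin d) ℝ :=
  Matrix.of fun i j =>
    if (j : ℕ) = (i : ℕ) + 1 then Xup ξ s ((i : ℕ) + 1)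
    else if (i : ℕ) = (j : ℕ) + 1 then Xlow ξ s ((j : ℕ) + 1)
    else if i = j then Xdiag ξ s Λ ((i : ℕ) + 1)
    else 0

/-- The `d×d` tridiagonal matrix `Y(d,ξ,s,Λ)`. -/
def Ymat (d : ℕ) (ξ : Fin 6 → ℝ) (s Λ : ℝ) : Matrix (Fin d) (Fin d) ℝ :=
  Matrix.of fun i j =>
    if (j : ℕ) = (i : ℕ) + 1 then Xup ξ s ((i : ℕ) + 1) * (((i : ℕ) + 1 : ℝ) + s - lamM ξ Λ)
    else if (i : ℕ) = (j : ℕ) + 1 then Xlow ξ s ((j : ℕ) + 1) * (((j : ℕ) + 1 : ℝ) + s - lamP ξ Λ)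
    else if i = j then Ydiag ξ s Λ ((i : ℕ) + 1)
    else 0

/- ## Auxiliary lemmas -/

private lemma v0' (a b c d e f : ℝ) : (![a,b,c,d,e,f] : Fin 6 → ℝ) 0 = a := rfl
private lemma v1' (a b c d e f : ℝ) : (![a,b,c,d,e,f] : Fin 6 → ℝ) 1 = b := rfl
private lemma v2' (a b c d e f : ℝ) : (![a,b,c,d,e,f] : Fin 6 → ℝ) 2 = c := rfl
private lemma v3' (a b c d e f : ℝ) : (![a,b,c,d,e,f] : Fin 6 → ℝ) 3 = d := rfl
private lemma v4' (a b c d e f : ℝ) : (![a,b,c,d,e,f] : Fin 6 → ℝ) 4 = e := rfl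
private lemma v5' (a b c d e f : ℝ) : (![a,b,c,d,e,f] : Fin 6 → ℝ) 5 = f := rfl

private lemma Xup_rel (ξ : Fin 6 → ℝ) (s D a : ℝ) :
    Xup ![ξ 0 - ξ 5, ξ 0 - ξ 4, ξ 0 - ξ 3, ξ 0 - ξ 2, ξ 0 - ξ 1, 0] (ξ 0 - s - D) a
      = - Xlow ξ s (D - a) := by
  simp only [Xup, Xlow, v0', v1', v2', v3', v4', v5']; ring

private lemma Xlow_rel (ξ : Fin 6 → ℝ) (s D a : ℝ) :
    Xlow ![ξ 0 - ξ 5, ξ 0 - ξ 4, ξ 0 - ξ 3, ξ 0 - ξ 2, ξ 0 - ξ 1, 0] (ξ 0 - s - D) a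
      = - Xup ξ s (D - a) := by
  simp only [Xup, Xlow, v0', v1', v2', v3', v4', v5']; ring

private lemma Xdiag_rel (ξ : Fin 6 → ℝ) (s Λ D a : ℝ) :
    Xdiag ![ξ 0 - ξ 5, ξ 0 - ξ 4, ξ 0 - ξ 3, ξ 0 - ξ 2, ξ 0 - ξ 1, 0] (ξ 0 - s - D) Λ a
      = - Xdiag ξ s Λ (D + 1 - a) := by
  simp only [Xdiag, Efun, Fin.sum_univ_six, v0', v1', v2', v3', v4', v5']; ring

set_option maxHeartbeats 1000000 in
private lemma Ydiag_rel (ξ : Fin 6 → ℝ) (s Λ D a : ℝ) :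
    Ydiag ![ξ 0 - ξ 5, ξ 0 - ξ 4, ξ 0 - ξ 3, ξ 0 - ξ 2, ξ 0 - ξ 1, 0] (ξ 0 - s - D) Λ a
      = Ydiag ξ s Λ (D + 1 - a) := by
  simp only [Ydiag, Efun, Fin.sum_univ_six, v0', v1', v2', v3', v4', v5']; ring

private lemma Yup_rel (ξ : Fin 6 → ℝ) (s Λ D a : ℝ) :
    Xup ![ξ 0 - ξ 5, ξ 0 - ξ 4, ξ 0 - ξ 3, ξ 0 - ξ 2, ξ 0 - ξ 1, 0] (ξ 0 - s - D) a
        * (a + (ξ 0 - s - D) - lamM ![ξ 0 - ξ 5, ξ 0 - ξ 4, ξ 0 - ξ 3, ξ 0 - ξ 2, ξ 0 - ξ 1, 0] Λ)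
      = Xlow ξ s (D - a) * ((D - a) + s - lamP ξ Λ) := by
  simp only [Xup, Xlow, lamP, lamM, Fin.sum_univ_six, v0', v1', v2', v3', v4', v5']; ring

private lemma Ylow_rel (ξ : Fin 6 → ℝ) (s Λ D a : ℝ) :
    Xlow ![ξ 0 - ξ 5, ξ 0 - ξ 4, ξ 0 - ξ 3, ξ 0 - ξ 2, ξ 0 - ξ 1, 0] (ξ 0 - s - D) a
        * (a + (ξ 0 - s - D) - lamP ![ξ 0 - ξ 5, ξ 0 - ξ 4, ξ 0 - ξ 3, ξ 0 - ξ 2, ξ 0 - ξ 1, 0] Λ)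
      = Xup ξ s (D - a) * ((D - a) + s - lamM ξ Λ) := by
  simp only [Xup, Xlow, lamP, lamM, Fin.sum_univ_six, v0', v1', v2', v3', v4', v5']; ring

private lemma JAJ {d : ℕ} (A : Matrix (Fin d) (Fin d) ℝ) (i j : Fin d) :
    ((Matrix.of fun i j : Fin d => if (i : ℕ) + (j : ℕ) + 2 = d + 1 then (1:ℝ) else 0) * A *
     (Matrix.of fun i j : Fin d => if (i : ℕ) + (j : ℕ) + 2 = d + 1 then (1:ℝ) else 0)) i j
      = A i.rev j.rev := by
  set J : Matrix (Fin d) (Fin d) ℝ :=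
    Matrix.of fun i j : Fin d => if (i : ℕ) + (j : ℕ) + 2 = d + 1 then (1:ℝ) else 0 with hJ
  have hval : ∀ k : Fin d, (k.rev : ℕ) = d - 1 - k := by
    intro k; simp [Fin.val_rev]; omega
  have hJe : ∀ a b : Fin d, J a b = if b = a.rev then 1 else 0 := by
    intro a b
    by_cases h : b = a.rev
    · subst h
      have hc : (a:ℕ) + (a.rev:ℕ) + 2 = d + 1 := by
        have := a.isLt; have := hval a; omega
      have := a.isLt
      simp [hJ, hc, Fin.val_rev]
      omega
    · rw [hJ]; simp only [Matrix.of_apply]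
      rw [if_neg, if_neg h]
      intro hc; apply h; apply Fin.ext
      have := a.isLt; have := b.isLt; have := hval a; omega
  have step2 : ∀ m, (J * A) i m = A i.rev m := by
    intro m
    rw [Matrix.mul_apply, Finset.sum_eq_single i.rev]
    · rw [hJe]; simp
    · intro k _ hk; rw [hJe, if_neg hk, zero_mul]
    · simp
  rw [Matrix.mul_apply, Finset.sum_eq_single j.rev]
  · rw [step2, hJe]; simp
  · intro k _ hk; rw [hJe]
    rw [if_neg, mul_zero]
    intro hc; apply hk
    rw [hc, Fin.rev_rev]
  · simp

/-- with `ξ′ = (ξ₁−ξ₆, ξ₁−ξ₅, ξ₁−ξ₄, ξ₁−ξ₃, ξ₁−ξ₂, 0)`, `s′ = ξ₁ − s − d` and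
`J` the `d×d` exchange matrix, we have `X(d,ξ′,s′,Λ) = −J·X(d,ξ,s,Λ)·J` and
`Y(d,ξ′,s′,Λ) = J·Y(d,ξ,s,Λ)·J`. -/
theorem stmt1 (d : ℕ) (hd : 1 ≤ d) (ξ : Fin 6 → ℝ) (s Λ : ℝ) :
    let ξ' : Fin 6 → ℝ := ![ξ 0 - ξ 5, ξ 0 - ξ 4, ξ 0 - ξ 3, ξ 0 - ξ 2, ξ 0 - ξ 1, 0]
    let s' : ℝ := ξ 0 - s - d
    let J : Matrix (Fin d) (Fin d) ℝ :=
      Matrix.of fun i j => if (i : ℕ) + (j : ℕ) + 2 = d + 1 then 1 else 0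
    Xmat d ξ' s' Λ = -(J * Xmat d ξ s Λ * J) ∧
    Ymat d ξ' s' Λ = J * Ymat d ξ s Λ * J := by
  intro ξ' s' J
  have hJAJ : ∀ (A : Matrix (Fin d) (Fin d) ℝ) (i j : Fin d),
      (J * A * J) i j = A i.rev j.rev := fun A i j => JAJ A i j
  have hval : ∀ k : Fin d, (k.rev : ℕ) = d - 1 - k := by
    intro k; simp [Fin.val_rev]; omega
  constructor
  · ext i j
    have hi := i.isLt; have hj := j.isLt
    have hri := hval i; have hrj := hval j
    rw [Matrix.neg_apply, hJAJ]
    simp only [Xmat, Matrix.of_apply]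
    by_cases h1 : (j:ℕ) = (i:ℕ) + 1
    · rw [if_pos h1, if_neg (by omega), if_pos (by omega)]
      have harg : ((j.rev:ℕ):ℝ) + 1 = (d:ℝ) - (((i:ℕ):ℝ) + 1) := by
        have h : ((j.rev:ℕ) + 1) + ((i:ℕ) + 1) = d := by omega
        have := congrArg (fun n : ℕ => (n : ℝ)) h
        push_cast at this; linarith
      rw [harg]
      exact Xup_rel ξ s d (((i:ℕ):ℝ) + 1)
    · by_cases h2 : (i:ℕ) = (j:ℕ) + 1
      · rw [if_neg h1, if_pos h2, if_pos (by omega)]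
        have harg : ((i.rev:ℕ):ℝ) + 1 = (d:ℝ) - (((j:ℕ):ℝ) + 1) := by
          have h : ((i.rev:ℕ) + 1) + ((j:ℕ) + 1) = d := by omega
          have := congrArg (fun n : ℕ => (n : ℝ)) h
          push_cast at this; linarith
        rw [harg]
        exact Xlow_rel ξ s d (((j:ℕ):ℝ) + 1)
      · by_cases h3 : i = j
        · have h3' : (i:ℕ) = (j:ℕ) := by rw [h3]
          rw [if_neg h1, if_neg h2, if_pos h3, if_neg (by omega), if_neg (by omega),
            if_pos (by rw [h3])]
          have harg : ((i.rev:ℕ):ℝ) + 1 = (d:ℝ) + 1 - (((i:ℕ):ℝ) + 1) := by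
            have h : ((i.rev:ℕ) + 1) + ((i:ℕ) + 1) = d + 1 := by omega
            have := congrArg (fun n : ℕ => (n : ℝ)) h
            push_cast at this; linarith
          rw [harg]
          exact Xdiag_rel ξ s Λ d (((i:ℕ):ℝ) + 1)
        · rw [if_neg h1, if_neg h2, if_neg h3, if_neg (by omega), if_neg (by omega),
            if_neg (fun hc => h3 (Fin.ext (by have := congrArg Fin.val hc; omega)))]
          simp
  · ext i j
    have hi := i.isLt; have hj := j.isLt
    have hri := hval i; have hrj := hval j
    rw [hJAJ]
    simp only [Ymat, Matrix.of_apply]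
    by_cases h1 : (j:ℕ) = (i:ℕ) + 1
    · rw [if_pos h1, if_neg (by omega), if_pos (by omega)]
      have harg : ((j.rev:ℕ):ℝ) + 1 = (d:ℝ) - (((i:ℕ):ℝ) + 1) := by
        have h : ((j.rev:ℕ) + 1) + ((i:ℕ) + 1) = d := by omega
        have := congrArg (fun n : ℕ => (n : ℝ)) h
        push_cast at this; linarith
      rw [harg]
      exact Yup_rel ξ s Λ d (((i:ℕ):ℝ) + 1)
    · by_cases h2 : (i:ℕ) = (j:ℕ) + 1
      · rw [if_neg h1, if_pos h2, if_pos (by omega)]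
        have harg : ((i.rev:ℕ):ℝ) + 1 = (d:ℝ) - (((j:ℕ):ℝ) + 1) := by
          have h : ((i.rev:ℕ) + 1) + ((j:ℕ) + 1) = d := by omega
          have := congrArg (fun n : ℕ => (n : ℝ)) h
          push_cast at this; linarith
        rw [harg]
        exact Ylow_rel ξ s Λ d (((j:ℕ):ℝ) + 1)
      · by_cases h3 : i = j
        · have h3' : (i:ℕ) = (j:ℕ) := by rw [h3]
          rw [if_neg h1, if_neg h2, if_pos h3, if_neg (by omega), if_neg (by omega),
            if_pos (by rw [h3])]
          have harg : ((i.rev:ℕ):ℝ) + 1 = (d:ℝ) + 1 - (((i:ℕ):ℝ) + 1) := by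
            have h : ((i.rev:ℕ) + 1) + ((i:ℕ) + 1) = d + 1 := by omega
            have := congrArg (fun n : ℕ => (n : ℝ)) h
            push_cast at this; linarith
          rw [harg]
          exact Ydiag_rel ξ s Λ d (((i:ℕ):ℝ) + 1)
        · rw [if_neg h1, if_neg h2, if_neg h3, if_neg (by omega), if_neg (by omega),
            if_neg (fun hc => h3 (Fin.ext (by have := congrArg Fin.val hc; omega)))]

end
end

section
/- Let m = (m₁,m₂,m₁′,m₂′,m₁″,m₂″) ∈ ℤ⁶ be such that ℓ and n are integers and d ≥ 1. Define m′ = (m₁+ℓ−n, m₂+n−ℓ, m₁′+ℓ−n, m₂′+n−ℓ, m₁″+n−ℓ, m₂″+ℓ−n) (the 'exchange of the two magic squares'). Then the data built from m′ satisfies ℓ′ = n and n′ = ℓ, the dimension d is unchanged, and the missing label matrices are literally equal: X_{m′} = X_m and Y_{m′} = Y_m. -/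
noncomputable section

open Finset Matrix

/-- `ℓ = (m₁+2m₂+m₁′+2m₂′−m₁″−2m₂″)/3` (exact when the divisibility holds). -/
def ellm (m : Fin 6 → ℤ) : ℤ := (m 0 + 2 * m 1 + m 2 + 2 * m 3 - m 4 - 2 * m 5) / 3

/-- `n = (2m₁+m₂+2m₁′+m₂′−2m₁″−m₂″)/3` (exact when the divisibility holds). -/
def enm (m : Fin 6 → ℤ) : ℤ := (2 * m 0 + m 1 + 2 * m 2 + m 3 - 2 * m 4 - m 5) / 3

/-- The six parameters `(ξ₁,…,ξ₆)` built from `m`: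
`(ξ₁,ξ₂,ξ₃) = (ℓ, m₂, m₁′+ℓ−n)` if `ℓ ≤ n`, `(n, m₁′, m₂+n−ℓ)` if `n < ℓ`;
`(ξ₄,ξ₅,ξ₆) = (ℓ−m₂′, n−m₁, 0)`. -/
def xiInt (m : Fin 6 → ℤ) : Fin 6 → ℤ :=
  if ellm m ≤ enm m then
    ![ellm m, m 1, m 2 + ellm m - enm m, ellm m - m 3, enm m - m 0, 0]
  else
    ![enm m, m 2, m 1 + enm m - ellm m, ellm m - m 3, enm m - m 0, 0]

/-- `ξ_a = min{ξ₁,ξ₂,ξ₃}`. -/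
def xiaInt (m : Fin 6 → ℤ) : ℤ := min (xiInt m 0) (min (xiInt m 1) (xiInt m 2))

/-- `ξ_b = max{ξ₄,ξ₅,0}`. -/
def xibInt (m : Fin 6 → ℤ) : ℤ := max (xiInt m 3) (max (xiInt m 4) 0)

/-- `d = ξ_a − ξ_b`. -/
def dInt (m : Fin 6 → ℤ) : ℤ := xiaInt m - xibInt m

/-- `Λ = ξ₁+ξ₂+ξ₃−ξ₄−ξ₅−ξ₆+2|ℓ−n|`. -/
def LamInt (m : Fin 6 → ℤ) : ℤ :=
  xiInt m 0 + xiInt m 1 + xiInt m 2 - xiInt m 3 - xiInt m 4 - xiInt m 5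
    + 2 * |ellm m - enm m|

/-- The missing label matrix `X_m` (of explicitly given size `d`). -/
def XmatM (d : ℕ) (m : Fin 6 → ℤ) : Matrix (Fin d) (Fin d) ℝ :=
  Xmat d (fun i => (xiInt m i : ℝ)) (xibInt m : ℝ) (LamInt m : ℝ)

/-- The missing label matrix `Y_m` (of explicitly given size `d`). -/
def YmatM (d : ℕ) (m : Fin 6 → ℤ) : Matrix (Fin d) (Fin d) ℝ :=
  Ymat d (fun i => (xiInt m i : ℝ)) (xibInt m : ℝ) (LamInt m : ℝ)

section SwapLemmas

variable (d : ℕ) (ξ ξ' : Fin 6 → ℝ) (s Λ : ℝ)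

lemma Efun_swap12 (h0 : ξ' 0 = ξ 0) (h1 : ξ' 1 = ξ 2) (h2 : ξ' 2 = ξ 1)
    (h3 : ξ' 3 = ξ 3) (h4 : ξ' 4 = ξ 4) (h5 : ξ' 5 = ξ 5) (j : ℝ) (k : ℕ) :
    Efun ξ' s j k = Efun ξ s j k := by
  simp only [Efun, Fin.sum_univ_six, h0, h1, h2, h3, h4, h5]
  ring

lemma sum_swap12 (h0 : ξ' 0 = ξ 0) (h1 : ξ' 1 = ξ 2) (h2 : ξ' 2 = ξ 1)
    (h3 : ξ' 3 = ξ 3) (h4 : ξ' 4 = ξ 4) (h5 : ξ' 5 = ξ 5) :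
    ∑ i, ξ' i = ∑ i, ξ i := by
  simp only [Fin.sum_univ_six, h0, h1, h2, h3, h4, h5]
  ring

lemma Xmat_swap12 (h0 : ξ' 0 = ξ 0) (h1 : ξ' 1 = ξ 2) (h2 : ξ' 2 = ξ 1)
    (h3 : ξ' 3 = ξ 3) (h4 : ξ' 4 = ξ 4) (h5 : ξ' 5 = ξ 5) :
    Xmat d ξ' s Λ = Xmat d ξ s Λ := by
  funext i j
  simp only [Xmat, Matrix.of_apply, Xup, Xlow, Xdiag,
    Efun_swap12 ξ ξ' s h0 h1 h2 h3 h4 h5, h0, h1, h2, h3, h4, h5]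
  split_ifs <;> ring

lemma Ymat_swap12 (h0 : ξ' 0 = ξ 0) (h1 : ξ' 1 = ξ 2) (h2 : ξ' 2 = ξ 1)
    (h3 : ξ' 3 = ξ 3) (h4 : ξ' 4 = ξ 4) (h5 : ξ' 5 = ξ 5) :
    Ymat d ξ' s Λ = Ymat d ξ s Λ := by
  funext i j
  simp only [Ymat, Matrix.of_apply, Xup, Xlow, Ydiag, lamP, lamM,
    Efun_swap12 ξ ξ' s h0 h1 h2 h3 h4 h5,
    sum_swap12 ξ ξ' h0 h1 h2 h3 h4 h5, h0, h1, h2, h3, h4, h5]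
  split_ifs <;> ring

end SwapLemmas
/-- the exchange of the two magic squares
`m′ = (m₁+ℓ−n, m₂+n−ℓ, m₁′+ℓ−n, m₂′+n−ℓ, m₁″+n−ℓ, m₂″+ℓ−n)` satisfies `ℓ′ = n`, `n′ = ℓ`,
leaves the dimension `d` unchanged, and the missing label matrices are literally equal:
`X_{m′} = X_m` and `Y_{m′} = Y_m`. -/
theorem stmt2 (m : Fin 6 → ℤ)
    (h3l : (3 : ℤ) ∣ (m 0 + 2 * m 1 + m 2 + 2 * m 3 - m 4 - 2 * m 5))
    (h3n : (3 : ℤ) ∣ (2 * m 0 + m 1 + 2 * m 2 + m 3 - 2 * m 4 - m 5))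
    (hd : 1 ≤ dInt m) :
    let ℓ := ellm m
    let n := enm m
    let m' : Fin 6 → ℤ :=
      ![m 0 + ℓ - n, m 1 + n - ℓ, m 2 + ℓ - n, m 3 + n - ℓ, m 4 + n - ℓ, m 5 + ℓ - n]
    ellm m' = n ∧ enm m' = ℓ ∧ dInt m' = dInt m ∧
    XmatM (dInt m).toNat m' = XmatM (dInt m).toNat m ∧
    YmatM (dInt m).toNat m' = YmatM (dInt m).toNat m := by
  intro ℓ n m'
  obtain ⟨a, ha⟩ := h3l
  obtain ⟨b, hb⟩ := h3n
  have hℓ : ℓ = a := by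
    show ellm m = a
    unfold ellm; rw [ha]; exact Int.mul_ediv_cancel_left _ (by norm_num)
  have hn : n = b := by
    show enm m = b
    unfold enm; rw [hb]; exact Int.mul_ediv_cancel_left _ (by norm_num)
  have e0 : m' 0 = m 0 + ℓ - n := rfl
  have e1 : m' 1 = m 1 + n - ℓ := rfl
  have e2 : m' 2 = m 2 + ℓ - n := rfl
  have e3 : m' 3 = m 3 + n - ℓ := rfl
  have e4 : m' 4 = m 4 + n - ℓ := rfl
  have e5 : m' 5 = m 5 + ℓ - n := rfl
  have hl' : ellm m' = n := by
    unfold ellm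
    rw [e0, e1, e2, e3, e4, e5]
    have : m 0 + ℓ - n + 2 * (m 1 + n - ℓ) + (m 2 + ℓ - n) + 2 * (m 3 + n - ℓ)
        - (m 4 + n - ℓ) - 2 * (m 5 + ℓ - n) = 3 * n := by omega
    rw [this]; exact Int.mul_ediv_cancel_left _ (by norm_num)
  have hn' : enm m' = ℓ := by
    unfold enm
    rw [e0, e1, e2, e3, e4, e5]
    have : 2 * (m 0 + ℓ - n) + (m 1 + n - ℓ) + 2 * (m 2 + ℓ - n) + (m 3 + n - ℓ)
        - 2 * (m 4 + n - ℓ) - (m 5 + ℓ - n) = 3 * ℓ := by omega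
    rw [this]; exact Int.mul_ediv_cancel_left _ (by norm_num)
  rcases lt_trichotomy ℓ n with h | h | h
  · -- ℓ < n : xiInt m uses first branch, xiInt m' the second
    have hx : xiInt m = ![ℓ, m 1, m 2 + ℓ - n, ℓ - m 3, n - m 0, 0] := by
      unfold xiInt; rw [if_pos h.le]
    have hx' : xiInt m' = ![ℓ, m 2 + ℓ - n, m 1, ℓ - m 3, n - m 0, 0] := by
      have hne : ¬ (ellm m' ≤ enm m') := by rw [hl', hn']; exact not_le.mpr h
      have k2 : m' 1 + enm m' - ellm m' = m 1 := by rw [hl', hn', e1]; ring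
      have k3 : ellm m' - m' 3 = ℓ - m 3 := by rw [hl', e3]; ring
      have k4 : enm m' - m' 0 = n - m 0 := by rw [hn', e0]; ring
      unfold xiInt
      rw [if_neg hne, k2, k3, k4, hn', e2]
    have h0 : xiInt m' 0 = xiInt m 0 := by rw [hx', hx]; rfl
    have h1 : xiInt m' 1 = xiInt m 2 := by rw [hx', hx]; rfl
    have h2 : xiInt m' 2 = xiInt m 1 := by rw [hx', hx]; rfl
    have h3 : xiInt m' 3 = xiInt m 3 := by rw [hx', hx]; rfl
    have h4 : xiInt m' 4 = xiInt m 4 := by rw [hx', hx]; rfl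
    have h5 : xiInt m' 5 = xiInt m 5 := by rw [hx', hx]; rfl
    have hxia : xiaInt m' = xiaInt m := by
      unfold xiaInt
      rw [h0, h1, h2, min_comm (xiInt m 2) (xiInt m 1)]
    have hxib : xibInt m' = xibInt m := by
      unfold xibInt; rw [h3, h4]
    have hLam : LamInt m' = LamInt m := by
      unfold LamInt
      rw [h0, h1, h2, h3, h4, h5, hl', hn', abs_sub_comm]
      ring
    have hdd : dInt m' = dInt m := by unfold dInt; rw [hxia, hxib]
    refine ⟨hl', hn', hdd, ?_, ?_⟩
    · unfold XmatM
      rw [hxib, hLam]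
      exact Xmat_swap12 _ _ _ _ _ (by exact_mod_cast h0)
        (by exact_mod_cast h1) (by exact_mod_cast h2)
        (by exact_mod_cast h3) (by exact_mod_cast h4)
        (by exact_mod_cast h5)
    · unfold YmatM
      rw [hxib, hLam]
      exact Ymat_swap12 _ _ _ _ _ (by exact_mod_cast h0)
        (by exact_mod_cast h1) (by exact_mod_cast h2)
        (by exact_mod_cast h3) (by exact_mod_cast h4)
        (by exact_mod_cast h5)
  · -- ℓ = n : m' = m
    have hm : m' = m := by
      funext i
      fin_cases i
      · show m 0 + ℓ - n = m 0; omega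
      · show m 1 + n - ℓ = m 1; omega
      · show m 2 + ℓ - n = m 2; omega
      · show m 3 + n - ℓ = m 3; omega
      · show m 4 + n - ℓ = m 4; omega
      · show m 5 + ℓ - n = m 5; omega
    rw [hm]
    exact ⟨h, h.symm, rfl, rfl, rfl⟩
  · -- n < ℓ
    have hx : xiInt m = ![n, m 2, m 1 + n - ℓ, ℓ - m 3, n - m 0, 0] := by
      unfold xiInt; rw [if_neg (by omega)]
    have hx' : xiInt m' = ![n, m 1 + n - ℓ, m 2, ℓ - m 3, n - m 0, 0] := by
      have hle : ellm m' ≤ enm m' := by rw [hl', hn']; exact h.le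
      have k2 : m' 2 + ellm m' - enm m' = m 2 := by rw [hl', hn', e2]; ring
      have k3 : ellm m' - m' 3 = ℓ - m 3 := by rw [hl', e3]; ring
      have k4 : enm m' - m' 0 = n - m 0 := by rw [hn', e0]; ring
      unfold xiInt
      rw [if_pos hle, k2, k3, k4, hl', e1]
    have h0 : xiInt m' 0 = xiInt m 0 := by rw [hx', hx]; rfl
    have h1 : xiInt m' 1 = xiInt m 2 := by rw [hx', hx]; rfl
    have h2 : xiInt m' 2 = xiInt m 1 := by rw [hx', hx]; rfl
    have h3 : xiInt m' 3 = xiInt m 3 := by rw [hx', hx]; rfl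
    have h4 : xiInt m' 4 = xiInt m 4 := by rw [hx', hx]; rfl
    have h5 : xiInt m' 5 = xiInt m 5 := by rw [hx', hx]; rfl
    have hxia : xiaInt m' = xiaInt m := by
      unfold xiaInt
      rw [h0, h1, h2, min_comm (xiInt m 2) (xiInt m 1)]
    have hxib : xibInt m' = xibInt m := by
      unfold xibInt; rw [h3, h4]
    have hLam : LamInt m' = LamInt m := by
      unfold LamInt
      rw [h0, h1, h2, h3, h4, h5, hl', hn', abs_sub_comm]
      ring
    have hdd : dInt m' = dInt m := by unfold dInt; rw [hxia, hxib]
    refine ⟨hl', hn', hdd, ?_, ?_⟩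
    · unfold XmatM
      rw [hxib, hLam]
      exact Xmat_swap12 _ _ _ _ _ (by exact_mod_cast h0)
        (by exact_mod_cast h1) (by exact_mod_cast h2)
        (by exact_mod_cast h3) (by exact_mod_cast h4)
        (by exact_mod_cast h5)
    · unfold YmatM
      rw [hxib, hLam]
      exact Ymat_swap12 _ _ _ _ _ (by exact_mod_cast h0)
        (by exact_mod_cast h1) (by exact_mod_cast h2)
        (by exact_mod_cast h3) (by exact_mod_cast h4)
        (by exact_mod_cast h5)

end
end

section
/- Let d ≥ 1 be an integer, ξ₁,…,ξ₆, s, Λ ∈ ℝ. Set A₂ = (1/2)(1−ξ₁²−ξ₂²−ξ₅²−ξ₆²) + (1/8)(ξ₁+ξ₂+ξ₅+ξ₆)², A₃ = −(1/4)(ξ₁+ξ₂−ξ₅−ξ₆)((ξ₁−ξ₂)²−(ξ₅−ξ₆)²), z₂ = (ξ₃+ξ₄)/2 − (ξ₁+ξ₂+ξ₅+ξ₆)/4, z₃ = (ξ₃−ξ₄)/2, z₁ = z₃² − Λ²/4, z₄ = 1/2, z₀ = A₃/4 − (z₂/3)(Λ²/4 + z₃² − 2z₂²/9 − A₂ − 1/2).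 Let H₁, H₂ be the d×d Hahn matrices built from parameters (η₁,η₂,η₅,η₆) = (ξ₁,ξ₂,ξ₅,ξ₆) and shift s, and H₃ = H₁H₂ − H₂H₁. Then X(d,ξ,s,Λ) = z₀·Id + z₁H₁ + z₂H₂ + z₃H₃ + z₄(H₁H₂ + H₂H₁). -/
noncomputable section

open Finset Matrix

/-- The diagonal Hahn matrix `H₁ = diag(0,−1,…,−(N−1)) + ((η₁+η₂+η₅+η₆−2)/4 − s)·Id`. -/
def H1mat (N : ℕ) (η1 η2 η5 η6 s : ℝ) : Matrix (Fin N) (Fin N) ℝ :=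
  Matrix.of fun i j =>
    if i = j then -((i : ℕ) : ℝ) + ((η1 + η2 + η5 + η6 - 2) / 4 - s) else 0

/-- The tridiagonal Hahn matrix `H₂` with `α_{j,j+1} = −(j+s−η₁)(j+s−η₂)`,
`α_{j+1,j} = −(j+s−η₅)(j+s−η₆)` and
`α_{j,j} = −(j−1+s−η₅)(j−1+s−η₆) − (j+s−η₁)(j+s−η₂) + (1/4)(η₁+η₂−η₅−η₆)(η₁+η₂−η₅−η₆−2)`. -/
def H2mat (N : ℕ) (η1 η2 η5 η6 s : ℝ) : Matrix (Fin N) (Fin N) ℝ :=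
  Matrix.of fun i j =>
    if (j : ℕ) = (i : ℕ) + 1 then
      -(((i : ℕ) + 1 : ℝ) + s - η1) * (((i : ℕ) + 1 : ℝ) + s - η2)
    else if (i : ℕ) = (j : ℕ) + 1 then
      -(((j : ℕ) + 1 : ℝ) + s - η5) * (((j : ℕ) + 1 : ℝ) + s - η6)
    else if i = j then
      -(((i : ℕ) : ℝ) + s - η5) * (((i : ℕ) : ℝ) + s - η6)
        - (((i : ℕ) + 1 : ℝ) + s - η1) * (((i : ℕ) + 1 : ℝ) + s - η2)
        + (1 / 4) * (η1 + η2 - η5 - η6) * (η1 + η2 - η5 - η6 - 2)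
    else 0

lemma H1mat_diag (N : ℕ) (a b c e s : ℝ) :
    H1mat N a b c e s
      = Matrix.diagonal (fun i : Fin N => -((i : ℕ) : ℝ) + ((a + b + c + e - 2) / 4 - s)) := rfl

/-- `X(d,ξ,s,Λ)` is the algebraic Heun--Hahn combination
`z₀·Id + z₁H₁ + z₂H₂ + z₃H₃ + z₄(H₁H₂+H₂H₁)` of the Hahn matrices built from
`(η₁,η₂,η₅,η₆) = (ξ₁,ξ₂,ξ₅,ξ₆)` and shift `s`. -/
theorem stmt3 (d : ℕ) (hd : 1 ≤ d) (ξ : Fin 6 → ℝ) (s Λ : ℝ) :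
    let A2 : ℝ := (1 / 2) * (1 - ξ 0 ^ 2 - ξ 1 ^ 2 - ξ 4 ^ 2 - ξ 5 ^ 2)
      + (1 / 8) * (ξ 0 + ξ 1 + ξ 4 + ξ 5) ^ 2
    let A3 : ℝ := -(1 / 4) * (ξ 0 + ξ 1 - ξ 4 - ξ 5) * ((ξ 0 - ξ 1) ^ 2 - (ξ 4 - ξ 5) ^ 2)
    let z2 : ℝ := (ξ 2 + ξ 3) / 2 - (ξ 0 + ξ 1 + ξ 4 + ξ 5) / 4
    let z3 : ℝ := (ξ 2 - ξ 3) / 2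
    let z1 : ℝ := z3 ^ 2 - Λ ^ 2 / 4
    let z4 : ℝ := 1 / 2
    let z0 : ℝ := A3 / 4 - (z2 / 3) * (Λ ^ 2 / 4 + z3 ^ 2 - 2 * z2 ^ 2 / 9 - A2 - 1 / 2)
    let H1 := H1mat d (ξ 0) (ξ 1) (ξ 4) (ξ 5) s
    let H2 := H2mat d (ξ 0) (ξ 1) (ξ 4) (ξ 5) s
    let H3 := H1 * H2 - H2 * H1
    Xmat d ξ s Λ =
      z0 • (1 : Matrix (Fin d) (Fin d) ℝ) + z1 • H1 + z2 • H2 + z3 • H3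
        + z4 • (H1 * H2 + H2 * H1) := by
  intro A2 A3 z2 z3 z1 z4 z0 H1 H2 H3
  ext i j
  simp only [H3, H2, H1, H1mat_diag, Matrix.add_apply, Matrix.sub_apply, Matrix.smul_apply,
    Matrix.one_apply, Matrix.diagonal_mul, Matrix.mul_diagonal, Matrix.diagonal_apply,
    Matrix.of_apply, smul_eq_mul, Xmat, H2mat]
  split_ifs with h1 h2 h3 h4 h5
  any_goals (exfalso; simp only [Fin.ext_iff] at *; omega)
  · have hj : ((j : ℕ) : ℝ) = ((i : ℕ) : ℝ) + 1 := by exact_mod_cast h1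
    simp only [Xup, Efun, Fin.sum_univ_six, A2, A3, z0, z1, z2, z3, z4, hj]
    ring
  · have hi : ((i : ℕ) : ℝ) = ((j : ℕ) : ℝ) + 1 := by exact_mod_cast h3
    simp only [Xlow, Efun, Fin.sum_univ_six, A2, A3, z0, z1, z2, z3, z4, hi]
    ring
  · subst h5
    simp only [Xdiag, Efun, Fin.sum_univ_six, A2, A3, z0, z1, z2, z3, z4]
    set_option maxHeartbeats 2000000 in ring
  · ring

end
end

section
/- Let p, q be integers with p, q ≥ 1 and let m = (2, 2, p+1, q+1, p+1, q+1). Then ℓ = n = 2, d = 2, the matrix X_m equals [[α − (p+q+3/2), −p], [q, α + (p+q+3/2)]] with α = −(1/27)(p−q)(3+2p+q)(3+p+2q) — so its characteristic polynomial is (t−α)² − ((p+q+3/2)² − pq) — and the characteristic polynomial of Y_m equals (t + 3/4)(t + (9+24p+24q+8p²+8q²+8pq)/12). -/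
noncomputable section

open Finset Matrix

/-- for `m = (2, 2, p+1, q+1, p+1, q+1)` with `p, q ≥ 1`, one has
`ℓ = n = 2`, `d = 2`, `X_m` is the explicit `2×2` matrix with diagonal `α ∓ (p+q+3/2)` and
off-diagonal entries `−p`, `q`, its characteristic polynomial is
`(t−α)² − ((p+q+3/2)² − pq)`, and the characteristic polynomial of `Y_m` is
`(t + 3/4)(t + (9+24p+24q+8p²+8q²+8pq)/12)`. -/
theorem stmt10 (p q : ℤ) (hp : 1 ≤ p) (hq : 1 ≤ q) :
    let m : Fin 6 → ℤ := ![2, 2, p + 1, q + 1, p + 1, q + 1]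
    let α : ℝ := -(1 / 27) * ((p : ℝ) - q) * (3 + 2 * p + q) * (3 + (p : ℝ) + 2 * q)
    ellm m = 2 ∧ enm m = 2 ∧ dInt m = 2 ∧
    XmatM 2 m = !![α - ((p : ℝ) + q + 3 / 2), -(p : ℝ); (q : ℝ), α + ((p : ℝ) + q + 3 / 2)] ∧
    (XmatM 2 m).charpoly =
      (Polynomial.X - Polynomial.C α) ^ 2 - Polynomial.C (((p : ℝ) + q + 3 / 2) ^ 2 - p * q) ∧
    (YmatM 2 m).charpoly =
      (Polynomial.X + Polynomial.C (3 / 4 : ℝ))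
        * (Polynomial.X + Polynomial.C ((9 + 24 * (p : ℝ) + 24 * q + 8 * (p : ℝ) ^ 2
            + 8 * (q : ℝ) ^ 2 + 8 * p * q) / 12)) := by
  intro m α
  have key : ∀ (M : Matrix (Fin 2) (Fin 2) ℝ), M.charpoly =
      Polynomial.X ^ 2 - Polynomial.C (M 0 0 + M 1 1) * Polynomial.X
        + Polynomial.C (M 0 0 * M 1 1 - M 0 1 * M 1 0) := by
    intro M
    rw [Matrix.charpoly, Matrix.det_fin_two]
    simp [Matrix.charmatrix_apply_eq, Matrix.charmatrix_apply_ne]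
    ring
  have hm0 : m 0 = 2 := rfl
  have hm1 : m 1 = 2 := rfl
  have hm2 : m 2 = p + 1 := rfl
  have hm3 : m 3 = q + 1 := rfl
  have hm4 : m 4 = p + 1 := rfl
  have hm5 : m 5 = q + 1 := rfl
  have hell : ellm m = 2 := by
    simp only [ellm, hm0, hm1, hm2, hm3, hm4, hm5]
    omega
  have hen : enm m = 2 := by
    simp only [enm, hm0, hm1, hm2, hm3, hm4, hm5]
    omega
  have hxi : xiInt m = ![2, 2, p + 1, 1 - q, 0, 0] := by
    unfold xiInt
    rw [if_pos (by rw [hell, hen]), hell, hen, hm0, hm1, hm2, hm3]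
    funext i
    fin_cases i <;> first | rfl | (simp; try omega)
  have v0 : (![2, 2, p + 1, 1 - q, 0, 0] : Fin 6 → ℤ) 0 = 2 := rfl
  have v1 : (![2, 2, p + 1, 1 - q, 0, 0] : Fin 6 → ℤ) 1 = 2 := rfl
  have v2 : (![2, 2, p + 1, 1 - q, 0, 0] : Fin 6 → ℤ) 2 = p + 1 := rfl
  have v3 : (![2, 2, p + 1, 1 - q, 0, 0] : Fin 6 → ℤ) 3 = 1 - q := rfl
  have v4 : (![2, 2, p + 1, 1 - q, 0, 0] : Fin 6 → ℤ) 4 = 0 := rfl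
  have v5 : (![2, 2, p + 1, 1 - q, 0, 0] : Fin 6 → ℤ) 5 = 0 := rfl
  have hxib : xibInt m = 0 := by
    simp only [xibInt, hxi, v3, v4]
    omega
  have hLam : LamInt m = p + q + 4 := by
    simp only [LamInt, hxi, v0, v1, v2, v3, v4, v5, hell, hen, sub_self, abs_zero,
      mul_zero, add_zero]
    ring
  have hX : XmatM 2 m = !![α - ((p : ℝ) + q + 3 / 2), -(p : ℝ);
      (q : ℝ), α + ((p : ℝ) + q + 3 / 2)] := by
    ext i j
    fin_cases i <;> fin_cases j <;>
      simp only [XmatM, Xmat, hxi, hxib, hLam, Xup, Xlow, Xdiag, Efun, Fin.sum_univ_six,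
        v0, v1, v2, v3, v4, v5, Matrix.of_apply, Matrix.cons_val', Matrix.cons_val_zero,
        Matrix.empty_val', Matrix.cons_val_fin_one, Matrix.cons_val_one, Matrix.head_cons,
        Matrix.head_fin_const, Fin.isValue, α] <;>
      norm_num <;> push_cast <;> ring
  refine ⟨hell, hen, ?_, hX, ?_, ?_⟩
  · simp only [dInt, xiaInt, hxib, hxi, v0, v1, v2]
    omega
  · rw [hX, key]
    refine Polynomial.funext fun x => ?_
    simp only [Matrix.cons_val', Matrix.cons_val_zero, Matrix.empty_val',
      Matrix.cons_val_fin_one, Matrix.cons_val_one, Matrix.head_cons, Matrix.head_fin_const,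
      Matrix.of_apply, Polynomial.eval_add, Polynomial.eval_sub, Polynomial.eval_mul,
      Polynomial.eval_pow, Polynomial.eval_X, Polynomial.eval_C]
    ring
  · rw [key]
    have e00 : YmatM 2 m 0 0 = Ydiag (fun i => ((![2, 2, p + 1, 1 - q, 0, 0] : Fin 6 → ℤ) i : ℝ))
        ((0 : ℤ) : ℝ) (((p + q + 4 : ℤ) : ℝ)) 1 := by
      simp [YmatM, Ymat, hxi, hxib, hLam]
    have e11 : YmatM 2 m 1 1 = Ydiag (fun i => ((![2, 2, p + 1, 1 - q, 0, 0] : Fin 6 → ℤ) i : ℝ))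
        ((0 : ℤ) : ℝ) (((p + q + 4 : ℤ) : ℝ)) 2 := by
      simp [YmatM, Ymat, hxi, hxib, hLam]
      norm_num
    have e01 : YmatM 2 m 0 1 = Xup (fun i => ((![2, 2, p + 1, 1 - q, 0, 0] : Fin 6 → ℤ) i : ℝ))
        ((0 : ℤ) : ℝ) 1 * ((1 : ℝ) + ((0 : ℤ) : ℝ)
          - lamM (fun i => ((![2, 2, p + 1, 1 - q, 0, 0] : Fin 6 → ℤ) i : ℝ)) (((p + q + 4 : ℤ) : ℝ))) := by
      simp [YmatM, Ymat, hxi, hxib, hLam]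
    have e10 : YmatM 2 m 1 0 = Xlow (fun i => ((![2, 2, p + 1, 1 - q, 0, 0] : Fin 6 → ℤ) i : ℝ))
        ((0 : ℤ) : ℝ) 1 * ((1 : ℝ) + ((0 : ℤ) : ℝ)
          - lamP (fun i => ((![2, 2, p + 1, 1 - q, 0, 0] : Fin 6 → ℤ) i : ℝ)) (((p + q + 4 : ℤ) : ℝ))) := by
      simp [YmatM, Ymat, hxi, hxib, hLam]
    rw [e00, e11, e01, e10]
    refine Polynomial.funext fun x => ?_
    simp only [Ydiag, Xup, Xlow, lamP, lamM, Efun, Fin.sum_univ_six, v0, v1, v2, v3, v4, v5,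
      Polynomial.eval_add, Polynomial.eval_sub, Polynomial.eval_mul, Polynomial.eval_pow,
      Polynomial.eval_X, Polynomial.eval_C]
    push_cast
    ring

end
end
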